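/- Two stuttering bisimilar infinite paths are won by the same player: if p and q are infinite paths in a parity game with p ≃ q (as paths), then the least priority occurring infinitely often on p equals the least priority occurring infinitely often on q. -/
import Mathlib


open scoped Classical

universe u

/-- `v →_R w`: an edge whose endpoints are `R`-related. -/
def StepR {V : Type u} (E R : V → V → Prop) (v w : V) : Prop := E v w ∧ R v w

/-- `v ⟹_R w`: reflexive-transitive closure of `→_R`. -/
def MStepR {V : Type u} (E R : V → V → Prop) : V → V → Prop :=
  Relation.ReflTransGen (StepR E R)

/-- `v` is `R`-divergent: an infinite path from `v` staying `R`-related to `v`. -/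
def DivR {V : Type u} (E R : V → V → Prop) (v : V) : Prop :=
  ∃ p : ℕ → V, p 0 = v ∧ (∀ i, E (p i) (p (i + 1))) ∧ ∀ i, R v (p i)

/-- `R` is a stuttering bisimulation on the parity game `(E, prio, owner)`. -/
def IsStutBisim {V : Type u} (E : V → V → Prop) (prio : V → ℕ) (owner : V → Bool)
    (R : V → V → Prop) : Prop :=
  Symmetric R ∧ ∀ v v', R v v' →
    prio v = prio v' ∧ owner v = owner v' ∧ (DivR E R v ↔ DivR E R v') ∧
    ∀ u, E v u → (R v u ∧ R u v') ∨
      ∃ u' w, MStepR E R v' w ∧ E w u' ∧ R v w ∧ R u u'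

/-- Stuttering bisimilarity: union of all stuttering bisimulations. -/
def StutBisim {V : Type u} (E : V → V → Prop) (prio : V → ℕ) (owner : V → Bool)
    (v v' : V) : Prop :=
  ∃ R, IsStutBisim E prio owner R ∧ R v v'

/-- `R` is a strong bisimulation on the parity game. -/
def IsStrongBisim {V : Type u} (E : V → V → Prop) (prio : V → ℕ) (owner : V → Bool)
    (R : V → V → Prop) : Prop :=
  Symmetric R ∧ ∀ v v', R v v' →
    prio v = prio v' ∧ owner v = owner v' ∧
    ∀ w, E v w → ∃ w', E v' w' ∧ R w w'

/-- Strong bisimilarity. -/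
def StrongBisim {V : Type u} (E : V → V → Prop) (prio : V → ℕ) (owner : V → Bool)
    (v v' : V) : Prop :=
  ∃ R, IsStrongBisim E prio owner R ∧ R v v'

/-- The list `[p 0, …, p n]`. -/
def prefixList {V : Type u} (p : ℕ → V) (n : ℕ) : List V := (List.range (n + 1)).map p

/-- `p` is an infinite play starting at `v`. -/
def IsPlay {V : Type u} (E : V → V → Prop) (v : V) (p : ℕ → V) : Prop :=
  p 0 = v ∧ ∀ i, E (p i) (p (i + 1))

/-- Consistency of an infinite play with a strategy `φ` of player `i`. -/
def ConsInf {V : Type u} (owner : V → Bool) (i : Bool) (φ : List V → Option V)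
    (p : ℕ → V) : Prop :=
  ∀ n, owner (p n) = i → ∀ u, φ (prefixList p n) = some u → p (n + 1) = u

/-- Consistency of a finite play (as a list) with a strategy `φ` of player `i`. -/
def ConsL {V : Type u} (owner : V → Bool) (i : Bool) (φ : List V → Option V)
    (q : List V) : Prop :=
  ∀ l₁ (x y : V) l₂, q = l₁ ++ x :: y :: l₂ → owner x = i →
    ∀ u, φ (l₁ ++ [x]) = some u → y = u

/-- Priorities occurring infinitely often along a play. -/
def infPrios {V : Type u} (prio : V → ℕ) (p : ℕ → V) : Set ℕ :=
  {k | ∀ N, ∃ n ≥ N, prio (p n) = k}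

/-- Player `i` wins the play `p` (player `false` = even wins iff the least
priority occurring infinitely often is even). -/
def WinsPlay {V : Type u} (prio : V → ℕ) (i : Bool) (p : ℕ → V) : Prop :=
  Even (sInf (infPrios prio p)) ↔ i = false

/-- `φ` is a (total, edge-respecting) strategy for player `i`. -/
def Strat {V : Type u} (E : V → V → Prop) (owner : V → Bool) (i : Bool)
    (φ : List V → Option V) : Prop :=
  ∀ (l : List V) (x : V), owner x = i → ∃ u, φ (l ++ [x]) = some u ∧ E x u

/-- `φ` is winning for player `i` from `v`. -/
def WinStrat {V : Type u} (E : V → V → Prop) (prio : V → ℕ) (owner : V → Bool)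
    (i : Bool) (φ : List V → Option V) (v : V) : Prop :=
  ∀ p, IsPlay E v p → ConsInf owner i φ p → WinsPlay prio i p

/-- Vertex `v` is won by player `i`. -/
def WonBy {V : Type u} (E : V → V → Prop) (prio : V → ℕ) (owner : V → Bool)
    (i : Bool) (v : V) : Prop :=
  ∃ φ, Strat E owner i φ ∧ WinStrat E prio owner i φ v

/-- Drop elements `R`-related to the last kept one. -/
noncomputable def collapseAux {V : Type u} (R : V → V → Prop) : V → List V → List V
  | _, [] => []
  | a, b :: l => if R a b then collapseAux R a l else b :: collapseAux R b l

/-- Collapse adjacent `R`-related elements, keeping one representative per block. -/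
noncomputable def collapse {V : Type u} (R : V → V → Prop) : List V → List V
  | [] => []
  | a :: l => a :: collapseAux R a l

/-- Stuttering equivalence of finite paths: same sequence of `≃`-classes. -/
def ListStutEq {V : Type u} (E : V → V → Prop) (prio : V → ℕ) (owner : V → Bool)
    (p q : List V) : Prop :=
  List.Forall₂ (StutBisim E prio owner)
    (collapse (StutBisim E prio owner) p) (collapse (StutBisim E prio owner) q)

/-- Stuttering equivalence of infinite paths: every finite prefix of one has a
stuttering equivalent finite prefix of the other, and vice versa. -/
def InfPathEq {V : Type u} (E : V → V → Prop) (prio : V → ℕ) (owner : V → Bool)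
    (p q : ℕ → V) : Prop :=
  (∀ n, ∃ m, ListStutEq E prio owner (prefixList p n) (prefixList q m)) ∧
  (∀ m, ∃ n, ListStutEq E prio owner (prefixList p n) (prefixList q m))

/-- `edgeN E n v u`: there is a path of exactly `n` edges from `v` to `u`. -/
def edgeN {V : Type u} (E : V → V → Prop) : ℕ → V → V → Prop
  | 0 => Eq
  | n + 1 => fun v u => ∃ w, E v w ∧ edgeN E n w u

/-- `|v,u|`: graph distance (∞ if unreachable). -/
noncomputable def distE {V : Type u} (E : V → V → Prop) (v u : V) : ℕ∞ :=
  sInf {x : ℕ∞ | ∃ n : ℕ, x = (n : ℕ∞) ∧ edgeN E n v u}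

/-- `v ≺_u v'`: proximity order towards `u`, refined by a base order `lt`. -/
def proxLt {V : Type u} (E : V → V → Prop) (lt : V → V → Prop) (u v v' : V) : Prop :=
  distE E v u < distE E v' u ∨ (distE E v u = distE E v' u ∧ lt v v')

/-- The minimum of a set under a strict total order `r` (junk if none exists). -/
noncomputable def minUnder {V : Type u} [Nonempty V] (r : V → V → Prop) (s : Set V) : V :=
  if h : ∃ m ∈ s, ∀ x ∈ s, x ≠ m → r m x then h.choose else Classical.choice inferInstance

/-- `Entry_{φ,v}(p)`: vertices of new classes reachable by `φ`-consistent paths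
from `v` stuttering equivalent to `p`. -/
def Entry {V : Type u} (E : V → V → Prop) (prio : V → ℕ) (owner : V → Bool) (i : Bool)
    (φ : List V → Option V) (v : V) (p : List V) : Set V :=
  { u | ∃ q : List V, q.Chain' E ∧ q.head? = some v ∧ ConsL owner i φ q ∧
      ListStutEq E prio owner p q ∧ (q ++ [u]).Chain' E ∧ ConsL owner i φ (q ++ [u]) ∧
      ¬ ListStutEq E prio owner (q ++ [u]) q }

/-- `target_{φ,v}(p)`: the chosen target vertex. -/
noncomputable def targetVertex {V : Type u} [Nonempty V] (E : V → V → Prop) (prio : V → ℕ)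
    (owner : V → Bool) (lt : V → V → Prop) (i : Bool) (φ : List V → Option V)
    (v : V) (p : List V) : V :=
  minUnder lt { u | StutBisim E prio owner u (minUnder lt (Entry E prio owner i φ v p)) ∧
    ∃ w x, p.getLast? = some x ∧ MStepR E (StutBisim E prio owner) x w ∧ E w u }

/-- The mimicking strategy `mimick_{φ,v}`. -/
noncomputable def mimick {V : Type u} [Nonempty V] (E : V → V → Prop) (prio : V → ℕ)
    (owner : V → Bool) (lt : V → V → Prop) (i : Bool) (φ : List V → Option V) (v : V) :
    List V → Option V :=
  fun p =>
    let x := p.getLast?.getD (Classical.choice inferInstance)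
    if Entry E prio owner i φ v p = ∅ then
      some (minUnder lt { u | E x u ∧ StutBisim E prio owner x u })
    else
      let t := targetVertex E prio owner lt i φ v p
      if E x t then some t
      else some (minUnder (proxLt E lt t) { u | E x u ∧ StutBisim E prio owner x u })

/-- Winner equivalence. -/
def WinEq {V : Type u} (E : V → V → Prop) (prio : V → ℕ) (owner : V → Bool)
    (v v' : V) : Prop :=
  ∀ i : Bool, WonBy E prio owner i v ↔ WonBy E prio owner i v'


section StatementNine

variable {V : Type u}

lemma stutBisim_prio_eq {E : V → V → Prop} {prio : V → ℕ} {owner : V → Bool} {v w : V}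
    (h : StutBisim E prio owner v w) : prio v = prio w := by
  obtain ⟨S, ⟨hsym, hS⟩, hvw⟩ := h
  exact (hS v w hvw).1

lemma collapseAux_append_single (R : V → V → Prop) (x : V) :
    ∀ (l : List V) (a : V), collapseAux R a (l ++ [x]) = collapseAux R a l ∨
      collapseAux R a (l ++ [x]) = collapseAux R a l ++ [x] := by
  intro l
  induction l with
  | nil => intro a; by_cases h : R a x <;> simp [collapseAux, h]
  | cons b t ih =>
    intro a
    by_cases h : R a b <;> simp only [List.cons_append, collapseAux, if_pos, if_neg, h]
    · exact ih a
    · rcases ih b with h' | h' <;> simp [h', h]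

lemma collapse_append_single (R : V → V → Prop) (l : List V) (x : V) :
    collapse R (l ++ [x]) = collapse R l ∨ collapse R (l ++ [x]) = collapse R l ++ [x] := by
  cases l with
  | nil => right; simp [collapse, collapseAux]
  | cons a t =>
    rcases collapseAux_append_single R x t a with h | h <;>
      simp [collapse, h]

lemma collapseAux_getLast? (R : V → V → Prop) (prio : V → ℕ)
    (hR : ∀ v w, R v w → prio v = prio w) :
    ∀ (l : List V) (a : V),
      ((a :: collapseAux R a l).getLast?).map prio = ((a :: l).getLast?).map prio := by
  intro l
  induction l with
  | nil => intro a; rfl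
  | cons b t ih =>
    intro a
    by_cases h : R a b
    · simp only [collapseAux, if_pos h]
      rw [ih a]
      cases t with
      | nil => simp [hR a b h]
      | cons c s => simp [List.getLast?_cons_cons]
    · simp only [collapseAux, if_neg h]
      rw [List.getLast?_cons_cons, ih b, List.getLast?_cons_cons]

lemma collapse_getLast? (R : V → V → Prop) (prio : V → ℕ)
    (hR : ∀ v w, R v w → prio v = prio w) (l : List V) :
    ((collapse R l).getLast?).map prio = (l.getLast?).map prio := by
  cases l with
  | nil => rfl
  | cons a t => exact collapseAux_getLast? R prio hR t a

lemma forall₂_map_prio_eq {R : V → V → Prop} (prio : V → ℕ)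
    (hR : ∀ v w, R v w → prio v = prio w) :
    ∀ {l₁ l₂ : List V}, List.Forall₂ R l₁ l₂ → l₁.map prio = l₂.map prio := by
  intro l₁ l₂ h
  induction h with
  | nil => rfl
  | cons hab _ ih => simp [hR _ _ hab, ih]

lemma prefixList_succ (p : ℕ → V) (n : ℕ) :
    prefixList p (n + 1) = prefixList p n ++ [p (n + 1)] := by
  simp [prefixList, List.range_succ]

lemma prefixList_getLast? (p : ℕ → V) (n : ℕ) :
    (prefixList p n).getLast? = some (p n) := by
  cases n with
  | zero => rfl
  | succ n => rw [prefixList_succ]; simp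

lemma key_transfer {α : Type u} (A B : ℕ → List α)
    (hA0 : (A 0).length ≤ 1) (hB0 : (B 0).length ≤ 1)
    (hAstep : ∀ n, A (n+1) = A n ∨ ∃ x, A (n+1) = A n ++ [x])
    (hBstep : ∀ n, B (n+1) = B n ∨ ∃ x, B (n+1) = B n ++ [x])
    (hAB : ∀ n, ∃ m, A n = B m) (hBA : ∀ m, ∃ n, A n = B m)
    (k : α) (h : ∀ N, ∃ n ≥ N, (A n).getLast? = some k) :
    ∀ N, ∃ m ≥ N, (B m).getLast? = some k := by
  have prefOf : ∀ (C : ℕ → List α), (∀ n, C (n+1) = C n ∨ ∃ x, C (n+1) = C n ++ [x]) →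
      ∀ {n n'}, n ≤ n' → C n <+: C n' := by
    intro C hC n n' hle
    induction n' with
    | zero => simp [Nat.le_zero.mp hle]
    | succ n' ih =>
      rcases Nat.lt_or_ge n (n'+1) with hlt | hge
      · have hpre := ih (Nat.lt_succ_iff.mp hlt)
        rcases hC n' with h' | ⟨x, h'⟩
        · rwa [h']
        · rw [h']; exact hpre.trans (List.prefix_append _ _)
      · have : n = n' + 1 := le_antisymm hle hge
        simp [this]
  have Apre : ∀ {n n2 : ℕ}, n ≤ n2 → A n <+: A n2 := fun h => prefOf A hAstep h
  have Bpre : ∀ {n n2 : ℕ}, n ≤ n2 → B n <+: B n2 := fun h => prefOf B hBstep h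
  have lenOf : ∀ (C : ℕ → List α), (C 0).length ≤ 1 →
      (∀ n, C (n+1) = C n ∨ ∃ x, C (n+1) = C n ++ [x]) → ∀ n, (C n).length ≤ n + 1 := by
    intro C hC0 hC n
    induction n with
    | zero => exact hC0
    | succ n ih =>
      rcases hC n with h' | ⟨x, h'⟩
      · rw [h']; omega
      · rw [h']; simp; omega
  have Blen := lenOf B hB0 hBstep
  intro N
  by_cases hbd : ∃ L, ∀ n, (A n).length ≤ L
  · -- bounded case
    obtain ⟨L, hL⟩ := hbd
    have hne : (Set.range fun n => (A n).length).Nonempty := ⟨(A 0).length, 0, rfl⟩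
    have hbdd : BddAbove (Set.range fun n => (A n).length) := ⟨L, by rintro x ⟨n, rfl⟩; exact hL n⟩
    obtain ⟨n1, hn1⟩ := Nat.sSup_mem hne hbdd
    have hn1' : (A n1).length = sSup (Set.range fun n => (A n).length) := hn1
    have hmax : ∀ n, (A n).length ≤ (A n1).length := by
      intro n
      have h2 : (A n).length ≤ sSup (Set.range fun n => (A n).length) := le_csSup hbdd ⟨n, rfl⟩
      omega
    have hstab : ∀ n, n1 ≤ n → A n = A n1 := by
      intro n hn
      exact ((Apre hn).eq_of_length (le_antisymm ((Apre hn).length_le) (hmax n))).symm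
    obtain ⟨n, hn, hlast⟩ := h n1
    have hlast1 : (A n1).getLast? = some k := by rw [← hstab n hn]; exact hlast
    obtain ⟨m1, hm1⟩ := hAB n1
    have hstabB : ∀ m, m1 ≤ m → B m = B m1 := by
      intro m hm
      obtain ⟨n', hn'⟩ := hBA m
      have : (B m).length ≤ (B m1).length := by
        rw [← hm1, ← hn']; exact hmax n'
      exact ((Bpre hm).eq_of_length (le_antisymm ((Bpre hm).length_le) this)).symm
    refine ⟨max N m1, le_max_left _ _, ?_⟩
    rw [hstabB _ (le_max_right _ _), ← hm1, hlast1]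
  · -- unbounded case
    push_neg at hbd
    obtain ⟨n2, hn2⟩ := hbd (N + 1)
    obtain ⟨n, hn, hlast⟩ := h n2
    obtain ⟨m, hm⟩ := hAB n
    have hlen : N + 1 < (B m).length := by
      rw [← hm]; exact lt_of_lt_of_le hn2 (Apre hn).length_le
    have := Blen m
    exact ⟨m, by omega, by rw [← hm]; exact hlast⟩


end StatementNine

/-- stuttering bisimilar infinite paths have the same least
priority occurring infinitely often (hence the same winner). -/
theorem infPathEq_same_least_infinite_priority {V : Type u}
    (E : V → V → Prop) (prio : V → ℕ) (owner : V → Bool)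
    (p q : ℕ → V) (hp : ∀ i, E (p i) (p (i + 1))) (hq : ∀ i, E (q i) (q (i + 1)))
    (h : InfPathEq E prio owner p q) :
    sInf (infPrios prio p) = sInf (infPrios prio q) := by
  classical
  have hR : ∀ v w, StutBisim E prio owner v w → prio v = prio w :=
    fun v w hvw => stutBisim_prio_eq hvw
  set R := StutBisim E prio owner with hRdef
  have hlast : ∀ (r : ℕ → V) (n : ℕ),
      ((collapse R (prefixList r n)).map prio).getLast? = some (prio (r n)) := by
    intro r n
    rw [List.getLast?_map, collapse_getLast? R prio hR, prefixList_getLast?]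
    rfl
  have hlen0 : ∀ (r : ℕ → V), ((collapse R (prefixList r 0)).map prio).length ≤ 1 := by
    intro r
    have h0 : prefixList r 0 = [r 0] := rfl
    rw [h0]
    simp [collapse, collapseAux]
  have hstep : ∀ (r : ℕ → V) (n : ℕ),
      (collapse R (prefixList r (n+1))).map prio = (collapse R (prefixList r n)).map prio ∨
      ∃ x, (collapse R (prefixList r (n+1))).map prio
          = (collapse R (prefixList r n)).map prio ++ [x] := by
    intro r n
    rw [prefixList_succ]
    rcases collapse_append_single R (prefixList r n) (r (n+1)) with h' | h'
    · left; rw [h']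
    · right; exact ⟨prio (r (n+1)), by rw [h']; simp⟩
  have hABm : ∀ n, ∃ m, (collapse R (prefixList p n)).map prio
      = (collapse R (prefixList q m)).map prio := by
    intro n
    obtain ⟨m, hm⟩ := h.1 n
    exact ⟨m, forall₂_map_prio_eq prio hR hm⟩
  have hBAm : ∀ m, ∃ n, (collapse R (prefixList p n)).map prio
      = (collapse R (prefixList q m)).map prio := by
    intro m
    obtain ⟨n, hn⟩ := h.2 m
    exact ⟨n, forall₂_map_prio_eq prio hR hn⟩
  have hchar : ∀ (r : ℕ → V) (k : ℕ), k ∈ infPrios prio r ↔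
      ∀ N, ∃ n ≥ N, ((collapse R (prefixList r n)).map prio).getLast? = some k := by
    intro r k
    simp only [infPrios, Set.mem_setOf_eq]
    constructor <;> intro hh N <;> obtain ⟨n, hn, he⟩ := hh N
    · exact ⟨n, hn, by rw [hlast r n, he]⟩
    · refine ⟨n, hn, ?_⟩
      have h2 := hlast r n
      rw [he] at h2
      exact (Option.some_inj.mp h2).symm
  have hset : infPrios prio p = infPrios prio q := by
    ext k
    rw [hchar p k, hchar q k]
    constructor
    · exact key_transfer _ _ (hlen0 p) (hlen0 q) (hstep p) (hstep q) hABm hBAm k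
    · exact key_transfer _ _ (hlen0 q) (hlen0 p) (hstep q) (hstep p)
        (fun m => (hBAm m).imp fun n hn => hn.symm)
        (fun n => (hABm n).imp fun m hm => hm.symm) k
  rw [hset]
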